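/- arXiv:2410.23878 — 4 statements merged into one kernel-verified Lean document; each statement's English description precedes it below -/
import Mathlib

section
/- Let G be a graph, let k ≥ 0, and let u be a vertex of G. Suppose there exist disjoint vertex sets A, B ⊆ V(G) \ {u}, each inducing a complete subgraph of G, and five distinct vertices v₁,…,v₅ ∉ A ∪ B ∪ {u}, such that each of u, v₁,…,v₅ has all its neighbors inside A ∪ B, the vertices u, v₁,…,v₅ are pairwise non-adjacent, and N(u) ⊆ N(vᵢ) for each i. Then G has a feedback vertex set of size at most k if and only if G − u has a feedback vertex set of size at most k. -/
open SimpleGraph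

/-- `X` is a feedback vertex set of `G`: deleting `X` leaves an acyclic graph. -/
def IsFVS {V : Type*} [Fintype V] (G : SimpleGraph V) (X : Finset V) : Prop :=
  (G.induce ((↑X : Set V)ᶜ)).IsAcyclic

/-- `G` has a feedback vertex set of size at most `k`. -/
def HasFVS {V : Type*} [Fintype V] (G : SimpleGraph V) (k : ℕ) : Prop :=
  ∃ X : Finset V, X.card ≤ k ∧ IsFVS G X

/-- The graph `G - u`, obtained by deleting the vertex `u`. -/
def delVert {V : Type*} (G : SimpleGraph V) (u : V) : SimpleGraph {x : V // x ≠ u} :=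
  G.comap Subtype.val

/-! If `X` is a feedback vertex set of `G - u`, then `X ∪ {u}` meets every cycle of `G`. When `u`
has at most one neighbour outside `X`, it lies on no cycle of `G - X`, so `X` itself works.
Otherwise `u` has two neighbours `a ≠ b` outside `X`. Every twin `v i` is adjacent to both, so at
most one twin avoids `X` (two would close a 4-cycle through `a` and `b`), and each clique has at
most two vertices outside `X` (three would form a triangle). Trading the at least four twins in `X`
for `u` and the at most three vertices of `(A ∪ B) \ X` other than `a` does not increase the size,
and in the complement of the new set every twin has `a` as its only neighbour, so it is a leaf and
lies on no cycle. -/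

open Finset

namespace SimpleGraph

variable {V W : Type*} {G : SimpleGraph V}

lemma Walk.IsCycle.induce {s : Set V} {x : V} {c : G.Walk x x} (hc : c.IsCycle)
    (hs : ∀ w ∈ c.support, w ∈ s) : (c.induce s hs).IsCycle := by
  rw [← Walk.isCycle_map_iff_of_injective (f := (Embedding.induce (G := G) s).toHom)
    (Embedding.induce (G := G) s).injective, Walk.map_induce]
  exact hc

lemma IsAcyclic.eq_of_adj_of_adj {H : SimpleGraph W} (h : H.IsAcyclic) {a b x y : W}
    (hab : a ≠ b) (hxa : H.Adj x a) (hxb : H.Adj x b) (hya : H.Adj y a) (hyb : H.Adj y b) :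
    x = y := by
  have hpath {z : W} (hza : H.Adj z a) (hzb : H.Adj z b) :
      (Walk.cons hza.symm (Walk.cons hzb Walk.nil)).IsPath := by
    simp [hab, hza.ne.symm, hzb.ne]
  simpa using congrArg (fun p : H.Path a b => p.1.snd)
    ((h.subsingleton_path a b).elim ⟨_, hpath hxa hxb⟩ ⟨_, hpath hya hyb⟩)

lemma IsAcyclic.card_le_two_of_isClique_induce {s : Set V} (h : (G.induce s).IsAcyclic)
    {C : Finset V} (hC : G.IsClique (C : Set V)) (hCs : (C : Set V) ⊆ s) : #C ≤ 2 := by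
  by_contra! h3
  obtain ⟨t, hts, ht⟩ := Finset.exists_subset_card_eq (Nat.succ_le_of_lt h3)
  exact (cliqueFree_induce_iff (G := G) s 3).1 (h.cliqueFree le_rfl) ((coe_subset.2 hts).trans hCs)
    ⟨hC.subset (coe_subset.2 hts), ht⟩

lemma IsAcyclic.card_le_one_of_adj_induce {s : Set V} (h : (G.induce s).IsAcyclic)
    {a b : V} (ha : a ∈ s) (hb : b ∈ s) (hab : a ≠ b) {T : Finset V} (hTs : (T : Set V) ⊆ s)
    (hTa : ∀ x ∈ T, G.Adj x a) (hTb : ∀ x ∈ T, G.Adj x b) : #T ≤ 1 :=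
  card_le_one.2 fun x hx y hy => congrArg Subtype.val <|
    h.eq_of_adj_of_adj (a := ⟨a, ha⟩) (b := ⟨b, hb⟩) (x := ⟨x, hTs hx⟩) (y := ⟨y, hTs hy⟩)
      (by simpa using hab) (hTa x hx) (hTb x hx) (hTa y hy) (hTb y hy)

lemma isAcyclic_induce_of_leaves {s t : Set V} (ht : (G.induce t).IsAcyclic)
    (hleaf : ∀ x ∈ s, x ∉ t → ∀ y ∈ s, ∀ z ∈ s, G.Adj x y → G.Adj x z → y = z) :
    (G.induce s).IsAcyclic := by
  classical
  intro x c hc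
  have hsupp : ∀ w ∈ (c.map (Embedding.induce (G := G) s).toHom).support, w ∈ t := by
    simp only [Walk.support_map, List.mem_map]
    rintro _ ⟨w, hw, rfl⟩
    by_contra hwt
    -- a cycle through `w` leaves and re-enters it along two different neighbours
    have hrot := hc.rotate hw
    have hnil := hrot.not_nil
    exact hrot.snd_ne_penultimate <| Subtype.ext <| hleaf w w.2 hwt _ (c.rotate w hw).snd.2 _
      (c.rotate w hw).penultimate.2 (Walk.adj_snd hnil) (Walk.adj_penultimate hnil).symm
  exact ht _ ((hc.map (Embedding.induce (G := G) s).injective).induce hsupp)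

end SimpleGraph

lemma card_insert_sdiff_insert_le {V : Type*} [DecidableEq V] {X N T : Finset V} {u a : V}
    (haN : a ∈ N) (haX : a ∉ X) (hN : #(N \ X) ≤ 4) (hT : 5 ≤ #T) (hTX : #(T \ X) ≤ 1) :
    #(insert u ((X ∪ N) \ insert a T)) ≤ #X := by
  have hXN : #(X ∪ N) ≤ #X + #(N \ X) := by
    rw [← union_sdiff_self_eq_union]; exact card_union_le _ _
  have hkept : #(insert a (T ∩ X)) ≤ #((X ∪ N) ∩ insert a T) :=
    card_le_card fun x => by
      simp only [mem_insert, mem_inter, mem_union]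
      rintro (rfl | ⟨hxT, hxX⟩) <;> simp [*]
  have := card_insert_of_notMem (s := T ∩ X) (a := a) (by simp [haX])
  have := card_sdiff_add_card_inter (X ∪ N) (insert a T)
  have := card_sdiff_add_card_inter T X
  have := card_insert_le u ((X ∪ N) \ insert a T)
  omega

section FeedbackVertexSet

variable {V : Type*} [Fintype V] {G : SimpleGraph V}

lemma IsFVS.mono {X Y : Finset V} (hX : IsFVS G X) (hXY : X ⊆ Y) : IsFVS G Y :=
  hX.embedding (G.induceHomOfLE (Set.compl_subset_compl.2 (coe_subset.2 hXY)))

lemma isFVS_delVert_iff [DecidableEq V] {u : V} {X : Finset {x // x ≠ u}} :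
    IsFVS (delVert G u) X ↔ IsFVS G (insert u (X.map (Function.Embedding.subtype _))) := by
  have hmem (x : V) : x ∉ insert u (X.map (.subtype _)) ↔ ∃ h : x ≠ u, ⟨x, h⟩ ∉ X := by
    by_cases hx : x = u <;> simp [hx]
  let e : (delVert G u).induce (↑X)ᶜ ≃g G.induce (↑(insert u (X.map (.subtype _))))ᶜ :=
    { toFun := fun w => ⟨w.1.1, (hmem _).2 ⟨w.1.2, w.2⟩⟩
      invFun := fun w => ⟨⟨w.1, ((hmem _).1 w.2).1⟩, ((hmem _).1 w.2).2⟩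
      left_inv := fun _ => rfl
      right_inv := fun _ => rfl
      map_rel_iff' := Iff.rfl }
  exact e.isAcyclic_iff

lemma isFVS_of_isFVS_insert [DecidableEq V] {X : Finset V} {u : V}
    (hX : IsFVS G (insert u X)) (hu : ∀ y ∉ X, ∀ z ∉ X, G.Adj u y → G.Adj u z → y = z) :
    IsFVS G X := by
  refine isAcyclic_induce_of_leaves hX fun x hxX hxt y hy z hz => ?_
  obtain rfl : x = u := by
    simp only [coe_insert, Set.mem_compl_iff, Set.mem_insert_iff, mem_coe, not_or] at hxX hxt
    tauto
  exact hu y hy z hz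

lemma isFVS_insert_sdiff_insert [DecidableEq V] {X N T : Finset V} {u a : V}
    (hX : IsFVS G (insert u X)) (haX : a ∉ X) (hTN : ∀ x ∈ T, x ∉ N)
    (hNT : ∀ x ∈ T, G.neighborSet x ⊆ N) : IsFVS G (insert u ((X ∪ N) \ insert a T)) := by
  set Y := insert u ((X ∪ N) \ insert a T)
  have hY (y : V) : y ∉ Y ↔ y ≠ u ∧ (y ∈ X ∨ y ∈ N → y = a ∨ y ∈ T) := by
    simp only [Y, mem_insert, mem_sdiff, mem_union, not_or, not_and_or, not_not]
    tauto
  have ht : (G.induce ((↑Y)ᶜ \ ↑T)).IsAcyclic := by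
    refine hX.embedding (G.induceHomOfLE fun y hy => ?_)
    obtain ⟨hyY, hyT⟩ := hy
    obtain ⟨hyu, hy⟩ := (hY y).1 hyY
    have : y ∉ X := fun hyX => (hy (.inl hyX)).elim (fun h => haX (h ▸ hyX)) hyT
    simp [hyu, this]
  refine isAcyclic_induce_of_leaves ht fun x hxY hxt y hy z hz hxy hxz => ?_
  have hxT : x ∈ T := by simpa using not_and.1 hxt hxY
  have hnbr {w : V} (hw : w ∉ Y) (hxw : G.Adj x w) : w = a := by
    have hwN : w ∈ N := hNT x hxT hxw
    exact ((hY w).1 hw).2 (.inr hwN) |>.resolve_right fun hwT => hTN w hwT hwN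
  exact (hnbr hy hxy).trans (hnbr hz hxz).symm

theorem exists_isFVS_card_le_of_isFVS_insert [DecidableEq V] {X A B : Finset V} {u : V}
    {v : Fin 5 → V} (hX : IsFVS G (insert u X)) (huA : u ∉ A) (huB : u ∉ B)
    (hAclique : G.IsClique (A : Set V)) (hBclique : G.IsClique (B : Set V))
    (hvinj : Function.Injective v) (hvA : ∀ i, v i ∉ A) (hvB : ∀ i, v i ∉ B) (hvu : ∀ i, v i ≠ u)
    (hNu : G.neighborSet u ⊆ ↑A ∪ ↑B) (hNv : ∀ i, G.neighborSet (v i) ⊆ ↑A ∪ ↑B)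
    (hsub : ∀ i, G.neighborSet u ⊆ G.neighborSet (v i)) :
    ∃ Y : Finset V, #Y ≤ #X ∧ IsFVS G Y := by
  by_cases hu : ∀ y ∉ X, ∀ z ∉ X, G.Adj u y → G.Adj u z → y = z
  · exact ⟨X, le_rfl, isFVS_of_isFVS_insert hX hu⟩
  push Not at hu
  obtain ⟨a, haX, b, hbX, hua, hub, hab⟩ := hu
  have hmem {w : V} (hwu : w ≠ u) (hwX : w ∉ X) : w ∈ (↑(insert u X) : Set V)ᶜ := by
    simp [hwu, hwX]
  have hclique {C : Finset V} (hC : G.IsClique (C : Set V)) (huC : u ∉ C) : #(C \ X) ≤ 2 :=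
    hX.card_le_two_of_isClique_induce (hC.subset (by simp)) fun w hw => by
      simp only [coe_sdiff, Set.mem_sdiff, mem_coe] at hw
      exact hmem (ne_of_mem_of_not_mem hw.1 huC) hw.2
  set T := univ.map ⟨v, hvinj⟩
  have hTX : #(T \ X) ≤ 1 := by
    refine hX.card_le_one_of_adj_induce (hmem hua.ne' haX) (hmem hub.ne' hbX) hab ?_ ?_ ?_ <;>
      simp only [T, coe_sdiff, coe_map, Set.subset_def, mem_sdiff, mem_map, mem_univ,
        true_and, Function.Embedding.coeFn_mk]
    · rintro _ ⟨⟨i, -, rfl⟩, hiX⟩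
      exact hmem (hvu i) hiX
    · rintro _ ⟨⟨i, rfl⟩, -⟩
      exact hsub i hua
    · rintro _ ⟨⟨i, rfl⟩, -⟩
      exact hsub i hub
  refine ⟨_, card_insert_sdiff_insert_le (N := A ∪ B) (by simpa using hNu hua) haX ?_
    (by simp [T]) hTX, isFVS_insert_sdiff_insert hX haX ?_ ?_⟩
  · rw [union_sdiff_distrib]
    exact (card_union_le _ _).trans (add_le_add (hclique hAclique huA) (hclique hBclique huB))
  · simp [T, hvA, hvB]
  · simpa [T, coe_union] using hNv

end FeedbackVertexSet

theorem fvs_rule_R0_general {V : Type*} [Fintype V] [DecidableEq V]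
    (G : SimpleGraph V) (k : ℕ) (u : V) (A B : Finset V) (v : Fin 5 → V)
    (huA : u ∉ A) (huB : u ∉ B)
    (hAclique : G.IsClique (A : Set V)) (hBclique : G.IsClique (B : Set V))
    (hvinj : Function.Injective v)
    (hvA : ∀ i, v i ∉ A) (hvB : ∀ i, v i ∉ B) (hvu : ∀ i, v i ≠ u)
    (hNu : G.neighborSet u ⊆ ↑A ∪ ↑B)
    (hNv : ∀ i, G.neighborSet (v i) ⊆ ↑A ∪ ↑B)
    (hsub : ∀ i, G.neighborSet u ⊆ G.neighborSet (v i)) :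
    HasFVS G k ↔ HasFVS (delVert G u) k := by
  constructor
  · rintro ⟨X, hXk, hX⟩
    refine ⟨X.subtype (· ≠ u), ((card_subtype _ _).trans_le (card_filter_le _ _)).trans hXk,
      isFVS_delVert_iff.2 (hX.mono fun x hx => ?_)⟩
    by_cases hxu : x = u <;> simp [hxu, hx]
  · rintro ⟨X, hXk, hX⟩
    obtain ⟨Y, hYX, hY⟩ := exists_isFVS_card_le_of_isFVS_insert (isFVS_delVert_iff.1 hX)
      huA huB hAclique hBclique hvinj hvA hvB hvu hNu hNv hsub
    exact ⟨Y, hYX.trans ((card_map _).trans_le hXk), hY⟩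

/-- Safeness of rule (R0): with two disjoint cliques `A`, `B` and five pairwise
non-adjacent "twins" `v i` of `u`, the vertex `u` may be deleted. -/
theorem fvs_rule_R0 {V : Type*} [Fintype V] [DecidableEq V]
    (G : SimpleGraph V) (k : ℕ) (u : V) (A B : Finset V) (v : Fin 5 → V)
    (hAB : Disjoint A B) (huA : u ∉ A) (huB : u ∉ B)
    (hAclique : G.IsClique (A : Set V)) (hBclique : G.IsClique (B : Set V))
    (hvinj : Function.Injective v)
    (hvA : ∀ i, v i ∉ A) (hvB : ∀ i, v i ∉ B) (hvu : ∀ i, v i ≠ u)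
    (hNu : G.neighborSet u ⊆ ↑A ∪ ↑B)
    (hNv : ∀ i, G.neighborSet (v i) ⊆ ↑A ∪ ↑B)
    (huvnadj : ∀ i, ¬ G.Adj u (v i))
    (hvvnadj : ∀ i j, ¬ G.Adj (v i) (v j))
    (hsub : ∀ i, G.neighborSet u ⊆ G.neighborSet (v i)) :
    HasFVS G k ↔ HasFVS (delVert G u) k :=
  fvs_rule_R0_general G k u A B v huA huB hAclique hBclique hvinj hvA hvB hvu hNu hNv hsub
end

section
/- Let G be a graph with two adjacent vertices u and u' such that u has degree exactly 2 and u and u' have no common neighbor. Let G' be the graph obtained by contracting the edge uu'. Then for every k ≥ 0, G has a feedback vertex set of size at most k if and only if G' has a feedback vertex set of size at most k. -/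
open SimpleGraph

/-- The graph obtained from `G` by contracting the edge `uv`: the vertex `v` is removed
and `u` inherits its neighbors. -/
def contractEdge {V : Type*} (G : SimpleGraph V) (u v : V) :
    SimpleGraph {x : V // x ≠ v} :=
  SimpleGraph.fromRel (fun a b => G.Adj a.1 b.1 ∨ (a.1 = u ∧ G.Adj v b.1))

/-!
A cycle through the degree-two vertex `u` passes through both of its neighbours `u'` and `w`, so a
feedback vertex set of `G` may trade `u` for `u'`, and one avoiding `u` meets every cycle of
`G / uu'`: such a cycle is a cycle of `G`, possibly after re-inserting `u` next to `u'`. Conversely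
a cycle of `G` avoiding `u` is a cycle of `G / uu'`, and one through `u` becomes `u' w ⋯ u'`,
still a cycle since `w` and `u'` are not adjacent.
-/

namespace SimpleGraph

variable {V : Type*} {G : SimpleGraph V}

open Walk

namespace Walk

lemma two_le_length {u v : V} (p : G.Walk u v) (hne : u ≠ v) (hadj : ¬G.Adj u v) :
    2 ≤ p.length := by
  by_contra! h
  interval_cases hl : p.length
  · exact hne (eq_of_length_eq_zero hl)
  · exact hadj (adj_of_length_eq_one hl)

lemma isCycle_cons_of_isPath {u v : V} (h : G.Adj u v) {p : G.Walk v u} (hp : p.IsPath)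
    (hl : 2 ≤ p.length) : (cons h p).IsCycle :=
  isCycle_iff_isPath_tail_and_le_length.2 ⟨by simpa using hp, by simp; omega⟩

lemma IsCycle.exists_isPath_of_mem_support [DecidableEq V] {v z : V} {c : G.Walk v v}
    (hc : c.IsCycle) (hz : z ∈ c.support) :
    ∃ a b, G.Adj z a ∧ G.Adj z b ∧ a ≠ b ∧
      ∃ r : G.Walk a b, r.IsPath ∧ z ∉ r.support ∧ r.support ⊆ c.support := by
  have hc' := hc.rotate hz
  have hsupp : (c.rotate z hz).support ⊆ c.support := fun x => (mem_support_rotate_iff ..).1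
  generalize c.rotate z hz = c' at hc' hsupp
  cases c' with
  | nil => exact absurd hc' not_isCycle_nil
  | cons ha q =>
    have hb := q.adj_penultimate (not_nil_of_ne ha.ne')
    rw [cons_isCycle_iff, ← concat_dropLast hb, concat_isPath_iff] at hc'
    rw [← concat_dropLast hb] at hsupp
    obtain ⟨⟨hr, hzr⟩, hza⟩ := hc'
    refine ⟨_, _, ha, hb.symm, fun hab => hza ?_, q.dropLast, hr, hzr, ?_⟩
    · rw [Sym2.eq_swap.trans (congrArg (s(·, z)) hab), edges_concat, List.concat_eq_append]
      exact List.mem_concat_self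
    · exact fun x hx => hsupp (List.mem_cons_of_mem _ (support_subset_support_concat _ _ hx))

lemma IsCycle.exists_isPath_between_neighbors [DecidableEq V] {v z x y : V}
    {c : G.Walk v v} (hc : c.IsCycle) (hz : z ∈ c.support)
    (hN : ∀ t, G.Adj z t → t = x ∨ t = y) :
    ∃ r : G.Walk x y, r.IsPath ∧ z ∉ r.support ∧ r.support ⊆ c.support := by
  obtain ⟨a, b, ha, hb, hab, r, hr, hzr, hrc⟩ := hc.exists_isPath_of_mem_support hz
  rcases hN a ha with rfl | rfl <;> rcases hN b hb with rfl | rfl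
  · exact absurd rfl hab
  · exact ⟨r, hr, hzr, hrc⟩
  · exact ⟨r.reverse, hr.reverse, by simpa using hzr, by simpa using hrc⟩
  · exact absurd rfl hab

end Walk

lemma exists_neighborFinset_eq_pair [DecidableEq V] {z a : V} [Fintype (G.neighborSet z)]
    (hdeg : G.degree z = 2) (ha : G.Adj z a) :
    ∃ b, b ≠ a ∧ G.neighborFinset z = {a, b} := by
  rw [← card_neighborFinset_eq_degree, Finset.card_eq_two] at hdeg
  obtain ⟨x, y, hxy, hN⟩ := hdeg
  have : a ∈ ({x, y} : Finset V) := hN ▸ (G.mem_neighborFinset z a).2 ha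
  rw [Finset.mem_insert, Finset.mem_singleton] at this
  rcases this with rfl | rfl
  · exact ⟨y, hxy.symm, hN⟩
  · exact ⟨x, hxy, hN.trans (Finset.pair_comm _ _)⟩

section Contraction

variable {u u' w : V}

lemma contractEdge_adj {a b : {x // x ≠ u}} :
    (contractEdge G u' u).Adj a b ↔
      a ≠ b ∧ (G.Adj a b ∨ a.1 = u' ∧ G.Adj u b ∨ b.1 = u' ∧ G.Adj u a) := by
  simp only [contractEdge, fromRel_adj, G.adj_comm b.1 a.1]
  tauto

lemma delVert_le_contractEdge : delVert G u ≤ contractEdge G u' u :=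
  fun _ _ h => contractEdge_adj.2 ⟨(G.ne_of_adj h <| congrArg _ ·), Or.inl h⟩

lemma delVert_adj_of_contractEdge_adj {a b : {x // x ≠ u}} (ha : a.1 ≠ u') (hb : b.1 ≠ u')
    (h : (contractEdge G u' u).Adj a b) : (delVert G u).Adj a b := by
  rw [contractEdge_adj] at h
  tauto

def Walk.toContractEdge {a b : V} (p : G.Walk a b) (hp : ∀ x ∈ p.support, x ≠ u) :
    (contractEdge G u' u).Walk ⟨a, hp a p.start_mem_support⟩ ⟨b, hp b p.end_mem_support⟩ :=
  (p.induce {x | x ≠ u} hp).map ⟨fun x => ⟨x.1, x.2⟩, (delVert_le_contractEdge ·)⟩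

lemma Walk.map_val_support_toContractEdge {a b : V} (p : G.Walk a b)
    (hp : ∀ x ∈ p.support, x ≠ u) :
    (p.toContractEdge (u' := u') hp).support.map Subtype.val = p.support := by
  simp [toContractEdge, support_induce]

lemma Walk.length_toContractEdge {a b : V} (p : G.Walk a b) (hp : ∀ x ∈ p.support, x ≠ u) :
    (p.toContractEdge (u' := u') hp).length = p.length := by
  simpa using congrArg List.length (p.map_val_support_toContractEdge hp)

lemma Walk.IsPath.toContractEdge {a b : V} {p : G.Walk a b} (h : p.IsPath)
    (hp : ∀ x ∈ p.support, x ≠ u) : (p.toContractEdge (u' := u') hp).IsPath :=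
  (IsPath.of_map (f := (Embedding.induce _).toHom) (by rwa [map_induce])).map
    fun _ _ h => Subtype.ext (congrArg Subtype.val h)

lemma Walk.IsCycle.toContractEdge {a : V} {p : G.Walk a a} (h : p.IsCycle)
    (hp : ∀ x ∈ p.support, x ≠ u) : (p.toContractEdge (u' := u') hp).IsCycle :=
  (IsCycle.of_map (f := (Embedding.induce _).toHom) (by rwa [map_induce])).map
    fun _ _ h => Subtype.ext (congrArg Subtype.val h)

def Walk.ofContractEdge {a b : {x // x ≠ u}} (d : (contractEdge G u' u).Walk a b)
    (hd : ∀ x ∈ d.support, x.1 ≠ u') : G.Walk a b :=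
  (d.transfer (delVert G u) fun e he => by
    induction e using Sym2.ind with
    | _ x y =>
      exact delVert_adj_of_contractEdge_adj (hd x (d.fst_mem_support_of_mem_edges he))
        (hd y (d.snd_mem_support_of_mem_edges he)) (d.adj_of_mem_edges he)).map
    ⟨Subtype.val, id⟩

lemma Walk.mem_support_ofContractEdge {a b : {x // x ≠ u}} {d : (contractEdge G u' u).Walk a b}
    {hd : ∀ x ∈ d.support, x.1 ≠ u'} {x : V} :
    x ∈ (d.ofContractEdge hd).support ↔ ∃ y ∈ d.support, y.1 = x := by
  rw [ofContractEdge, support_map, support_transfer]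
  exact List.mem_map

lemma Walk.IsPath.ofContractEdge {a b : {x // x ≠ u}} {d : (contractEdge G u' u).Walk a b}
    (h : d.IsPath) (hd : ∀ x ∈ d.support, x.1 ≠ u') : (d.ofContractEdge hd).IsPath :=
  (h.transfer _).map Subtype.val_injective

lemma Walk.IsCycle.ofContractEdge {a : {x // x ≠ u}} {d : (contractEdge G u' u).Walk a a}
    (h : d.IsCycle) (hd : ∀ x ∈ d.support, x.1 ≠ u') : (d.ofContractEdge hd).IsCycle :=
  (h.transfer _).map Subtype.val_injective

def contractEdgeMap [DecidableEq V] (hu : u' ≠ u) (x : V) : {x // x ≠ u} :=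
  if h : x = u then ⟨u', hu⟩ else ⟨x, h⟩

lemma contractEdgeMap_self [DecidableEq V] (hu : u' ≠ u) : contractEdgeMap hu u = ⟨u', hu⟩ :=
  dif_pos rfl

lemma contractEdgeMap_val [DecidableEq V] (hu : u' ≠ u) (y : {x // x ≠ u}) :
    contractEdgeMap hu y.1 = y :=
  dif_neg y.2

lemma adj_or_adj_of_contractEdge_adj {hu : u' ≠ u} {x : {x // x ≠ u}}
    (h : (contractEdge G u' u).Adj ⟨u', hu⟩ x) : G.Adj u' x ∨ G.Adj u x := by
  rcases (contractEdge_adj.1 h).2 with h' | ⟨-, h'⟩ | ⟨h', -⟩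
  exacts [Or.inl h', Or.inr h', absurd (Subtype.ext h') h.ne']

lemma exists_isCycle_of_isPath_of_adj {a b : V} (huu' : G.Adj u u') (ha : G.Adj u' a)
    (hb : G.Adj u' b ∨ G.Adj u b) {r : G.Walk a b} (hr : r.IsPath) (hab : a ≠ b)
    (hu'r : u' ∉ r.support) (hur : u ∉ r.support) :
    ∃ c : G.Walk u' u', c.IsCycle ∧
      ∀ x ∈ c.support, x = u ∨ x = u' ∨ x ∈ r.support := by
  rcases hb with hb | hb
  · refine ⟨cons ha (r.concat hb.symm), isCycle_cons_of_isPath _ (hr.concat hu'r _) ?_, ?_⟩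
    · have : r.length ≠ 0 := fun h => hab (eq_of_length_eq_zero h)
      rw [length_concat]
      omega
    · simp only [support_cons, support_concat, List.mem_cons, List.mem_append]
      tauto
  · have hu'r' : u' ∉ (r.concat hb.symm).support := by
      simp [support_concat, hu'r, huu'.ne']
    refine ⟨cons ha ((r.concat hb.symm).concat huu'),
      isCycle_cons_of_isPath _ ((hr.concat hur _).concat hu'r' _) (by simp), ?_⟩
    simp only [support_cons, support_concat, List.mem_cons, List.mem_append]
    tauto

theorem exists_isCycle_of_isCycle_contractEdge [DecidableEq V] (huu' : G.Adj u u')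
    (hN : ∀ x, G.Adj u x → x = u' ∨ x = w) {z : {x // x ≠ u}}
    {d : (contractEdge G u' u).Walk z z} (hd : d.IsCycle) :
    ∃ (v : V) (c : G.Walk v v), c.IsCycle ∧
      ∀ x ∈ c.support, contractEdgeMap huu'.ne' x ∈ d.support := by
  by_cases hu' : ⟨u', huu'.ne'⟩ ∈ d.support
  · obtain ⟨a, b, ha, hb, hab, r, hr, hu'r, hrd⟩ := hd.exists_isPath_of_mem_support hu'
    -- `a` and `b` cannot both be reached only through `u`: its one other neighbour is `w`.
    wlog ha' : G.Adj u' a generalizing a b r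
    · have eq_w :
          ∀ {x}, (contractEdge G u' u).Adj ⟨u', huu'.ne'⟩ x → G.Adj u x → x.1 = w :=
        fun h h' => (hN _ h').resolve_left fun e => h.ne (Subtype.ext e.symm)
      have hb' : G.Adj u' b := (adj_or_adj_of_contractEdge_adj hb).resolve_right fun hb' =>
        hab (Subtype.ext ((eq_w ha ((adj_or_adj_of_contractEdge_adj ha).resolve_left ha')).trans
          (eq_w hb hb').symm))
      exact this b a hb ha hab.symm r.reverse hr.reverse (by simpa using hu'r)
        (by simpa using hrd) hb'
    have hr' : ∀ x ∈ r.support, x.1 ≠ u' :=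
      fun x hx h => hu'r ((show x = ⟨u', huu'.ne'⟩ from Subtype.ext h) ▸ hx)
    obtain ⟨c, hc, hcr⟩ :=
      exists_isCycle_of_isPath_of_adj huu' ha' (adj_or_adj_of_contractEdge_adj hb)
      (hr.ofContractEdge hr') (fun h => hab (Subtype.ext h))
      (fun h => by obtain ⟨y, hy, hyu'⟩ := mem_support_ofContractEdge.1 h; exact hr' y hy hyu')
      (fun h => by obtain ⟨y, -, hyu⟩ := mem_support_ofContractEdge.1 h; exact y.2 hyu)
    refine ⟨u', c, hc, fun x hx => ?_⟩
    rcases hcr x hx with rfl | rfl | hx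
    · rwa [contractEdgeMap_self]
    · rwa [contractEdgeMap_val huu'.ne' ⟨x, _⟩]
    · obtain ⟨y, hy, rfl⟩ := mem_support_ofContractEdge.1 hx
      rw [contractEdgeMap_val]
      exact hrd hy
  · have hd' : ∀ x ∈ d.support, x.1 ≠ u' :=
      fun x hx h => hu' ((show x = ⟨u', huu'.ne'⟩ from Subtype.ext h) ▸ hx)
    refine ⟨z, d.ofContractEdge hd', hd.ofContractEdge hd', fun x hx => ?_⟩
    obtain ⟨y, hy, rfl⟩ := mem_support_ofContractEdge.1 hx
    rwa [contractEdgeMap_val]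

theorem exists_isCycle_contractEdge_of_isCycle [DecidableEq V] (hw : G.Adj u w) (hwu' : w ≠ u')
    (hN : ∀ x, G.Adj u x → x = u' ∨ x = w) (hu'w : ¬G.Adj u' w) {v : V} {c : G.Walk v v}
    (hc : c.IsCycle) :
    ∃ (z : {x // x ≠ u}) (d : (contractEdge G u' u).Walk z z), d.IsCycle ∧
      ∀ y ∈ d.support, y.1 ∈ c.support := by
  by_cases hu : u ∈ c.support
  · obtain ⟨r, hr, hur, hrc⟩ :=
      hc.exists_isPath_between_neighbors hu fun x hx => (hN x hx).symm
    have hr' : ∀ x ∈ r.support, x ≠ u := fun x hx h => hur (h ▸ hx)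
    have hadj : (contractEdge G u' u).Adj ⟨u', hr' u' r.end_mem_support⟩ ⟨w, hw.ne'⟩ :=
      contractEdge_adj.2
        ⟨fun h => hwu' (congrArg Subtype.val h).symm, Or.inr (Or.inl ⟨rfl, hw⟩)⟩
    refine ⟨_, cons hadj (r.toContractEdge hr'),
      isCycle_cons_of_isPath _ (hr.toContractEdge hr') ?_, ?_⟩
    · rw [length_toContractEdge]
      exact r.two_le_length hwu' fun h => hu'w h.symm
    · intro y hy
      rw [support_cons, List.mem_cons] at hy
      rcases hy with rfl | hy
      · exact hrc r.end_mem_support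
      · exact hrc (r.map_val_support_toContractEdge hr' ▸ List.mem_map_of_mem hy)
  · have hc' : ∀ x ∈ c.support, x ≠ u := fun x hx h => hu (h ▸ hx)
    refine ⟨_, c.toContractEdge hc', hc.toContractEdge hc', fun y hy => ?_⟩
    exact c.map_val_support_toContractEdge hc' ▸ List.mem_map_of_mem hy

end Contraction

end SimpleGraph

lemma isFVS_iff {V : Type*} [Fintype V] {G : SimpleGraph V} {X : Finset V} :
    IsFVS G X ↔ ∀ ⦃v : V⦄ (c : G.Walk v v), c.IsCycle → ∃ x ∈ c.support, x ∈ X := by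
  refine ⟨fun h v c hc => ?_, fun h v c hc => ?_⟩
  · by_contra! hX
    exact h (c.induce ((↑X : Set V)ᶜ) hX)
      (.of_map (f := (Embedding.induce _).toHom) (by rwa [Walk.map_induce]))
  · obtain ⟨x, hx, hxX⟩ :=
      h _ (hc.map (f := (Embedding.induce (G := G) (↑X)ᶜ).toHom) Subtype.val_injective)
    rw [Walk.support_map, List.mem_map] at hx
    obtain ⟨y, -, rfl⟩ := hx
    exact y.2 hxX

/-- Safeness of rule (R2): contracting an edge `u u'` where `u` has degree two and
`u`, `u'` have no common neighbor does not change having a feedback vertex set of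
size at most `k`. -/
theorem fvs_rule_R2 {V : Type*} [Fintype V] [DecidableEq V]
    (G : SimpleGraph V) [DecidableRel G.Adj] (u u' : V)
    (hadj : G.Adj u u')
    (hdeg : G.degree u = 2)
    (hcommon : ∀ w, ¬ (G.Adj u w ∧ G.Adj u' w)) (k : ℕ) :
    HasFVS G k ↔ HasFVS (contractEdge G u' u) k := by
  obtain ⟨w, hwu', hN⟩ := exists_neighborFinset_eq_pair hdeg hadj
  have adj_iff : ∀ x, G.Adj u x ↔ x = u' ∨ x = w := by simp [← mem_neighborFinset, hN]
  have hw : G.Adj u w := (adj_iff w).2 (Or.inr rfl)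
  constructor
  · rintro ⟨X, hXk, hX⟩
    refine ⟨X.image (contractEdgeMap hadj.ne'), Finset.card_image_le.trans hXk,
      isFVS_iff.2 fun z d hd => ?_⟩
    obtain ⟨v, c, hc, hcd⟩ :=
      exists_isCycle_of_isCycle_contractEdge hadj (fun x => (adj_iff x).1) hd
    obtain ⟨x, hx, hxX⟩ := isFVS_iff.1 hX c hc
    exact ⟨_, hcd x hx, Finset.mem_image_of_mem _ hxX⟩
  · rintro ⟨Y, hYk, hY⟩
    refine ⟨Y.image Subtype.val, Finset.card_image_le.trans hYk, isFVS_iff.2 fun v c hc => ?_⟩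
    obtain ⟨z, d, hd, hdc⟩ := exists_isCycle_contractEdge_of_isCycle hw hwu'
      (fun x => (adj_iff x).1) (fun h => hcommon w ⟨hw, h⟩) hc
    obtain ⟨y, hy, hyY⟩ := isFVS_iff.1 hY d hd
    exact ⟨y.1, hdc y hy, Finset.mem_image_of_mem _ hyY⟩
end

section
/- Let T be a tree with at least two vertices in which every leaf is adjacent (in an ambient graph G) to a fixed vertex v₁ outside T, and suppose V(T) ∪ {v₁,…,v_q} spans a subgraph of G where K = {v₁,…,v_q} is a clique and every vertex u of T has N_G(u) ⊆ K ∪ V(T) with N_G(u) ∩ K a non-empty prefix {v₁,…,v_{q_u}}. Then G has a feedback vertex set of size at most k if and only if G − v₁ has a feedback vertex set of size at most k − 1. -/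
/-!
Every vertex `x` of `T` is adjacent to `v₀ = v 0`, and its other neighbours lie in the clique
`K` or in `T`, hence are adjacent to `v₀` too: `v₀` dominates `x`. Thus the transposition of
`x` and `v₀` embeds `G - (X - x + v₀)` into `G - X`, so a solution `X` containing `x` but not
`v₀` may trade `x` for `v₀`. A solution avoiding `v₀` meets the triangle formed by `v₀` and an
edge of `T`, so it contains such an `x`; hence there is always an optimal solution through `v₀`.
-/

open SimpleGraph

section

open Finset

variable {V : Type*} {G : SimpleGraph V}

def SimpleGraph.Dominates (G : SimpleGraph V) (u w : V) : Prop :=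
  ∀ ⦃z⦄, G.Adj w z → z ≠ u → G.Adj u z

lemma SimpleGraph.Dominates.adj_swap [DecidableEq V] {u w : V} (h : G.Dominates u w) {x y : V}
    (hx : x ≠ u) (hy : y ≠ u) (hxy : G.Adj x y) :
    G.Adj (Equiv.swap w u x) (Equiv.swap w u y) := by
  rcases eq_or_ne x w with rfl | hxw
  · rw [Equiv.swap_apply_left, Equiv.swap_apply_of_ne_of_ne hxy.ne' hy]
    exact h hxy hy
  rcases eq_or_ne y w with rfl | hyw
  · rw [Equiv.swap_apply_left, Equiv.swap_apply_of_ne_of_ne hxw hx]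
    exact (h hxy.symm hx).symm
  · rwa [Equiv.swap_apply_of_ne_of_ne hxw hx, Equiv.swap_apply_of_ne_of_ne hyw hy]

namespace IsFVS

variable [Fintype V] {X : Finset V}

lemma mem_or_mem_or_mem (hX : IsFVS G X) {a b c : V}
    (hab : G.Adj a b) (hac : G.Adj a c) (hbc : G.Adj b c) : a ∈ X ∨ b ∈ X ∨ c ∈ X := by
  classical
  by_contra! h
  obtain ⟨ha, hb, hc⟩ := h
  refine IsAcyclic.cliqueFree hX le_rfl {⟨a, ha⟩, ⟨b, hb⟩, ⟨c, hc⟩}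
    (is3Clique_triple_iff.2 ⟨?_, ?_, ?_⟩)
  exacts [hab, hac, hbc]

lemma insert_erase_of_dominates [DecidableEq V] (hX : IsFVS G X) {u w : V}
    (hw : w ∈ X) (hu : u ∉ X) (hdom : G.Dominates u w) : IsFVS G (insert u (X.erase w)) := by
  have hswap : ∀ x ∉ insert u (X.erase w), Equiv.swap w u x ∉ X := by
    intro x hx
    simp only [mem_insert, mem_erase, not_or] at hx
    rcases eq_or_ne x w with rfl | hxw
    · rwa [Equiv.swap_apply_left]
    · rw [Equiv.swap_apply_of_ne_of_ne hxw hx.1]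
      exact fun h => hx.2 ⟨hxw, h⟩
  have hne : ∀ x ∉ insert u (X.erase w), x ≠ u := fun x hx h => hx (h ▸ mem_insert_self _ _)
  refine IsAcyclic.comap ⟨fun x => ⟨Equiv.swap w u x, hswap x x.2⟩,
    fun {x y} hxy => hdom.adj_swap (hne x x.2) (hne y y.2) hxy⟩ ?_ hX
  exact fun x y h => Subtype.ext ((Equiv.swap w u).injective (congrArg Subtype.val h))

lemma exists_mem_card_le_of_dominates [DecidableEq V] (hX : IsFVS G X) {u x y : V}
    (hxy : G.Adj x y) (hxu : G.Adj x u) (hyu : G.Adj y u)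
    (hx : G.Dominates u x) (hy : G.Dominates u y) :
    ∃ X' : Finset V, X'.card ≤ X.card ∧ u ∈ X' ∧ IsFVS G X' := by
  by_cases hu : u ∈ X
  · exact ⟨X, le_rfl, hu, hX⟩
  obtain ⟨w, hw, hwX⟩ : ∃ w, G.Dominates u w ∧ w ∈ X := by
    rcases hX.mem_or_mem_or_mem hxy hxu hyu with h | h | h
    exacts [⟨x, hx, h⟩, ⟨y, hy, h⟩, absurd h hu]
  refine ⟨insert u (X.erase w), ?_, mem_insert_self _ _, hX.insert_erase_of_dominates hwX hu hw⟩
  calc (insert u (X.erase w)).card ≤ (X.erase w).card + 1 := card_insert_le _ _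
    _ = X.card := card_erase_add_one hwX

lemma delVert_subtype [DecidableEq V] (hX : IsFVS G X) (u : V) :
    IsFVS (delVert G u) (X.subtype (· ≠ u)) := by
  refine IsAcyclic.comap ⟨fun x => ⟨x.1.1, fun h => x.2 (mem_subtype.2 h)⟩, id⟩ ?_ hX
  exact fun x y h => Subtype.ext (Subtype.ext (congrArg Subtype.val h :))

lemma insert_of_delVert [DecidableEq V] {u : V} {Y : Finset {x // x ≠ u}}
    (hY : IsFVS (delVert G u) Y) : IsFVS G (insert u (Y.map (Function.Embedding.subtype _))) := by
  have hmem : ∀ x ∉ insert u (Y.map (Function.Embedding.subtype _)),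
      ∃ hxu : x ≠ u, ⟨x, hxu⟩ ∉ Y := by
    intro x hx
    simp only [mem_insert, mem_map, Function.Embedding.subtype_apply, not_or, not_exists,
      not_and] at hx
    exact ⟨hx.1, fun h => hx.2 _ h rfl⟩
  refine IsAcyclic.comap ⟨fun x => ⟨⟨x, (hmem x x.2).1⟩, (hmem x x.2).2⟩, id⟩ ?_ hY
  exact fun x y h => Subtype.ext (congrArg (Subtype.val ∘ Subtype.val) h :)

end IsFVS

lemma hasFVS_delVert_iff [Fintype V] [DecidableEq V] {u : V} {k : ℕ} (hk : 1 ≤ k) :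
    HasFVS (delVert G u) (k - 1) ↔ ∃ X : Finset V, X.card ≤ k ∧ u ∈ X ∧ IsFVS G X := by
  constructor
  · rintro ⟨Y, hYk, hY⟩
    refine ⟨_, ?_, mem_insert_self _ _, hY.insert_of_delVert⟩
    calc _ ≤ (Y.map (Function.Embedding.subtype _)).card + 1 := card_insert_le _ _
      _ ≤ k := by rw [card_map]; omega
  · rintro ⟨X, hXk, huX, hX⟩
    refine ⟨_, ?_, hX.delVert_subtype u⟩
    rw [card_subtype, filter_ne', card_erase_of_mem huX]
    omega

lemma exists_adj_of_connected_induce {s : Set V} (hs : (G.induce s).Connected)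
    (hnt : s.Nontrivial) : ∃ x ∈ s, ∃ y ∈ s, G.Adj x y := by
  have := hnt.coe_sort
  obtain ⟨x⟩ := hs.nonempty
  obtain ⟨y, hxy⟩ := hs.preconnected.exists_adj_of_nontrivial x
  exact ⟨x, x.2, y, y.2, hxy⟩

end

theorem fvs_rule_R4_general {V : Type*} [Fintype V] [DecidableEq V]
    (G : SimpleGraph V) (k q : ℕ) (hk : 1 ≤ k) (hq : 0 < q)
    (v : Fin q → V)
    (hK : G.IsClique (Set.range v))
    (T : Finset V) (hT2 : 2 ≤ T.card)
    (htree : (G.induce (↑T : Set V)).IsTree)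
    (hnbrs : ∀ x ∈ T, G.neighborSet x ⊆ Set.range v ∪ ↑T)
    (hmono : ∀ x ∈ T, ∃ qx : ℕ, 1 ≤ qx ∧ qx ≤ q ∧
      ∀ i : Fin q, (G.Adj x (v i) ↔ (i : ℕ) < qx)) :
    HasFVS G k ↔ HasFVS (delVert G (v ⟨0, hq⟩)) (k - 1) := by
  have hadj : ∀ x ∈ T, G.Adj x (v ⟨0, hq⟩) := fun x hx => by
    obtain ⟨qx, hqx, -, hiff⟩ := hmono x hx
    exact (hiff _).2 hqx
  have hdom : ∀ x ∈ T, G.Dominates (v ⟨0, hq⟩) x := by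
    intro x hx z hxz hz
    rcases hnbrs x hx hxz with ⟨i, rfl⟩ | hzT
    · exact hK (Set.mem_range_self _) (Set.mem_range_self i) hz.symm
    · exact (hadj z hzT).symm
  obtain ⟨x, hx, y, hy, hxy⟩ :=
    exists_adj_of_connected_induce htree.connected (Finset.one_lt_card_iff_nontrivial.mp hT2).coe
  rw [hasFVS_delVert_iff hk]
  constructor
  · rintro ⟨X, hXk, hX⟩
    obtain ⟨X', hX'X, hvX', hX'⟩ := hX.exists_mem_card_le_of_dominates hxy (hadj x hx)
      (hadj y hy) (hdom x hx) (hdom y hy)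
    exact ⟨X', hX'X.trans hXk, hvX', hX'⟩
  · rintro ⟨X, hXk, -, hX⟩
    exact ⟨X, hXk, hX⟩

/-- Safeness of rule (R4): given a clique `K = {v 0, …, v (q-1)}` and a tree `T` of
`G - K` with at least two vertices, all of whose vertices have `K`-monotone
neighborhoods given by non-empty prefixes (so in particular every leaf of `T` is
adjacent to `v 0`), the vertex `v 0` can be forced into the solution. -/
theorem fvs_rule_R4 {V : Type*} [Fintype V] [DecidableEq V]
    (G : SimpleGraph V) (k q : ℕ) (hk : 1 ≤ k) (hq : 0 < q)
    (v : Fin q → V) (hvinj : Function.Injective v)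
    (hK : G.IsClique (Set.range v))
    (T : Finset V) (hT2 : 2 ≤ T.card)
    (hTK : ∀ x ∈ T, x ∉ Set.range v)
    (htree : (G.induce (↑T : Set V)).IsTree)
    (hnbrs : ∀ x ∈ T, G.neighborSet x ⊆ Set.range v ∪ ↑T)
    (hmono : ∀ x ∈ T, ∃ qx : ℕ, 1 ≤ qx ∧ qx ≤ q ∧
      ∀ i : Fin q, (G.Adj x (v i) ↔ (i : ℕ) < qx))
    (hleaf : ∀ x ∈ T, ((↑T : Set V) ∩ G.neighborSet x).Subsingleton →
      G.Adj x (v ⟨0, hq⟩)) :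
    HasFVS G k ↔ HasFVS (delVert G (v ⟨0, hq⟩)) (k - 1) :=
  fvs_rule_R4_general G k q hk hq v hK T hT2 htree hnbrs hmono
end

section
/- Let G be a planar graph, T a subtree of G rooted at r, and P_i, P_j two further vertices of G. Suppose u, v, w are three pairwise incomparable vertices of T (no one lies in the rooted subtree of another), each distinct from r, such that each of the rooted subtrees T_u, T_v, T_w contains a vertex adjacent to P_i and a vertex adjacent to P_j, and the remainder T − T_u − T_v − T_w is connected and contains r. Then contracting T_u, T_v, T_w and T − T_u − T_v − T_w to single vertices yields a K_{3,3} minor in G — a contradiction. Hence no such configuration exists in a planar graph. -/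
open SimpleGraph

/-- `H` is a minor of `G`. -/
def IsMinor {W V : Type*} (H : SimpleGraph W) (G : SimpleGraph V) : Prop :=
  ∃ φ : W → Set V,
    (∀ w, (φ w).Nonempty) ∧
    (∀ w, (G.induce (φ w)).Connected) ∧
    (Pairwise fun w w' => Disjoint (φ w) (φ w')) ∧
    ∀ ⦃w w'⦄, H.Adj w w' → ∃ a ∈ φ w, ∃ b ∈ φ w', G.Adj a b

/-- Planarity, via Wagner's characterization: no `K₅` and no `K₃,₃` minor. -/
def Planar {V : Type*} (G : SimpleGraph V) : Prop :=
  ¬ IsMinor (completeGraph (Fin 5)) G ∧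
  ¬ IsMinor (completeBipartiteGraph (Fin 3) (Fin 3)) G

/-!
Contract each `A m` to a vertex, and likewise `{Pi}`, `{Pj}` and `R`. The three contracted
`A`'s are then each adjacent to the three other branch vertices, which is a `K₃,₃` minor.
-/

section

variable {V : Type*} {G : SimpleGraph V}

lemma connected_induce_singleton (v : V) : (G.induce {v}).Connected :=
  Connected.of_subsingleton

lemma isMinor_of_connected {W : Type*} {H : SimpleGraph W} (φ : W → Set V)
    (hconn : ∀ w, (G.induce (φ w)).Connected)
    (hdisj : Pairwise fun w w' => Disjoint (φ w) (φ w'))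
    (hadj : ∀ ⦃w w'⦄, H.Adj w w' → ∃ a ∈ φ w, ∃ b ∈ φ w', G.Adj a b) :
    IsMinor H G :=
  ⟨φ, fun w => Set.nonempty_coe_sort.mp (hconn w).nonempty, hconn, hdisj, hadj⟩

lemma isMinor_completeBipartiteGraph {α β : Type*} (A : α → Set V) (B : β → Set V)
    (hAconn : ∀ a, (G.induce (A a)).Connected) (hBconn : ∀ b, (G.induce (B b)).Connected)
    (hAdisj : Pairwise fun a a' => Disjoint (A a) (A a'))
    (hBdisj : Pairwise fun b b' => Disjoint (B b) (B b'))
    (hABdisj : ∀ a b, Disjoint (A a) (B b))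
    (hadj : ∀ a b, ∃ x ∈ A a, ∃ y ∈ B b, G.Adj x y) :
    IsMinor (completeBipartiteGraph α β) G := by
  refine isMinor_of_connected (Sum.elim A B) (Sum.rec hAconn hBconn) ?_ ?_
  · rintro (a | b) (a' | b') hne
    · exact hAdisj (Sum.inl_injective.ne_iff.mp hne)
    · exact hABdisj a b'
    · exact (hABdisj a' b).symm
    · exact hBdisj (Sum.inr_injective.ne_iff.mp hne)
  · rintro (a | b) (a' | b') hab
    · simp at hab
    · exact hadj a b'
    · obtain ⟨x, hx, y, hy, hxy⟩ := hadj a' b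
      exact ⟨y, hy, x, hx, hxy.symm⟩
    · simp at hab

end

theorem no_K33_configuration_in_planar_general {V : Type*} (G : SimpleGraph V)
    (hG : Planar G)
    (A : Fin 3 → Set V) (R : Set V) (Pi Pj : V) (hPij : Pi ≠ Pj)
    (hAconn : ∀ m, (G.induce (A m)).Connected)
    (hRconn : (G.induce R).Connected)
    (hAdisj : Pairwise fun m m' => Disjoint (A m) (A m'))
    (hAR : ∀ m, Disjoint (A m) R)
    (hPiA : ∀ m, Pi ∉ A m) (hPjA : ∀ m, Pj ∉ A m)
    (hPiR : Pi ∉ R) (hPjR : Pj ∉ R)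
    (hadji : ∀ m, ∃ a ∈ A m, G.Adj a Pi)
    (hadjj : ∀ m, ∃ a ∈ A m, G.Adj a Pj)
    (hadjR : ∀ m, ∃ a ∈ A m, ∃ b ∈ R, G.Adj a b) :
    False := by
  refine hG.2 (isMinor_completeBipartiteGraph A ![{Pi}, {Pj}, R] hAconn ?_ hAdisj ?_ ?_ ?_)
  · intro n
    fin_cases n
    exacts [connected_induce_singleton Pi, connected_induce_singleton Pj, hRconn]
  · intro n n' hne
    fin_cases n <;> fin_cases n' <;> simp_all [eq_comm]
  · intro m n
    fin_cases n
    exacts [Set.disjoint_singleton_right.mpr (hPiA m),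
      Set.disjoint_singleton_right.mpr (hPjA m), hAR m]
  · intro m n
    fin_cases n
    · simpa using hadji m
    · simpa using hadjj m
    · exact hadjR m

/-- In a planar graph there is no configuration consisting of three disjoint connected
subtrees `A 0`, `A 1`, `A 2`, a connected remainder `R`, and two further vertices
`Pi ≠ Pj`, where each `A m` is attached to `Pi`, to `Pj`, and to `R`: contracting the
branch sets would yield a `K₃,₃` minor. -/
theorem no_K33_configuration_in_planar {V : Type*} (G : SimpleGraph V)
    (hG : Planar G)
    (A : Fin 3 → Set V) (R : Set V) (Pi Pj : V) (hPij : Pi ≠ Pj)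
    (hAne : ∀ m, (A m).Nonempty) (hRne : R.Nonempty)
    (hAconn : ∀ m, (G.induce (A m)).Connected)
    (hRconn : (G.induce R).Connected)
    (hAdisj : Pairwise fun m m' => Disjoint (A m) (A m'))
    (hAR : ∀ m, Disjoint (A m) R)
    (hPiA : ∀ m, Pi ∉ A m) (hPjA : ∀ m, Pj ∉ A m)
    (hPiR : Pi ∉ R) (hPjR : Pj ∉ R)
    (hadji : ∀ m, ∃ a ∈ A m, G.Adj a Pi)
    (hadjj : ∀ m, ∃ a ∈ A m, G.Adj a Pj)
    (hadjR : ∀ m, ∃ a ∈ A m, ∃ b ∈ R, G.Adj a b) :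
    False :=
  no_K33_configuration_in_planar_general G hG A R Pi Pj hPij hAconn hRconn hAdisj hAR hPiA hPjA hPiR
    hPjR hadji hadjj hadjR
end
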